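/- arXiv:math/0306172 — 4 statements merged into one kernel-verified Lean document; each statement's English description precedes it below -/
import Mathlib

section
/- Let (A, μ, ∂) be a unital GDQ ring, X ∈ A with ∂X = 1⊗1, and N = Ker ∂. Let β₁, β₂, β₃ be p×p matrices over N such that β₂ − β₁(X⊗I_p)β₃ is invertible in M_p(A). Then α = β₃(β₂ − β₁(X⊗I_p)β₃)⁻¹β₁ is a corepresentation, i.e. (∂ ⊗ id_{M_p})(α) = α ⊗_{M_p} α, meaning ∂a_{ik} = Σ_j a_{ij} ⊗ a_{jk} for all i,k. -/
/-!
Apply `∂` entrywise to matrices. The Leibniz rule then holds for matrix products, with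
`M ⊗ 1` on the left and `1 ⊗ M` on the right; differentiating `Q⁻¹ Q = 1` gives
`∂(Q⁻¹) = -(Q⁻¹ ⊗ 1) ∂Q (1 ⊗ Q⁻¹)`. For `Q = β₂ - β₁ (X ⊗ I) β₃` with `∂`-constant `βᵢ`
only the middle factor contributes, `∂Q = -(β₁ ⊗ 1)(1 ⊗ β₃)`, hence
`∂(Q⁻¹) = (Q⁻¹β₁ ⊗ 1)(1 ⊗ β₃Q⁻¹)`, and sandwiching between `β₃` and `β₁` yields
`∂α = (α ⊗ 1)(1 ⊗ α)`, which is the corepresentation identity read entrywise.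
-/

open TensorProduct

namespace GDQ

variable {R A : Type*} [CommSemiring R] [Ring A] [Algebra R A]

def IsLeibniz (D : A →ₗ[R] A ⊗[R] A) : Prop :=
  ∀ a b : A, D (a * b) = (a ⊗ₜ[R] 1) * D b + D a * (1 ⊗ₜ[R] b)

def IsCorep {n : Type*} [Fintype n] (D : A →ₗ[R] A ⊗[R] A) (α : Matrix n n A) : Prop :=
  ∀ i k, D (α i k) = ∑ j, α i j ⊗ₜ[R] α j k

variable {D : A →ₗ[R] A ⊗[R] A}

theorem IsLeibniz.apply_one (hD : IsLeibniz D) : D 1 = 0 := by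
  have h := hD 1 1
  rwa [mul_one, ← Algebra.TensorProduct.one_def, one_mul, mul_one, right_eq_add] at h

section Matrix

variable {n : Type*}

theorem map_eq_zero_iff_forall_mem_ker (M : Matrix n n A) :
    M.map D = 0 ↔ ∀ i j, M i j ∈ LinearMap.ker D := by
  simp [← Matrix.ext_iff]

variable [DecidableEq n]

theorem map_smul_one (X : A) : (X • (1 : Matrix n n A)).map D = Matrix.diagonal fun _ => D X := by
  rw [Matrix.smul_one_eq_diagonal, Matrix.diagonal_map D.map_zero]

theorem IsLeibniz.map_matrix_one (hD : IsLeibniz D) : (1 : Matrix n n A).map D = 0 := by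
  rw [← Matrix.diagonal_one, Matrix.diagonal_map D.map_zero, hD.apply_one, Matrix.diagonal_zero]

variable [Fintype n]

variable (R) in
abbrev tmulOne : Matrix n n A →ₐ[R] Matrix n n (A ⊗[R] A) :=
  (Algebra.TensorProduct.includeLeft : A →ₐ[R] A ⊗[R] A).mapMatrix

variable (R) in
abbrev oneTmul : Matrix n n A →ₐ[R] Matrix n n (A ⊗[R] A) :=
  (Algebra.TensorProduct.includeRight : A →ₐ[R] A ⊗[R] A).mapMatrix

theorem tmulOne_mul_oneTmul_apply (M N : Matrix n n A) (i k : n) :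
    (tmulOne R M * oneTmul R N) i k = ∑ j, M i j ⊗ₜ[R] N j k := by
  simp [Matrix.mul_apply]

theorem isCorep_iff_map (α : Matrix n n A) :
    IsCorep D α ↔ α.map D = tmulOne R α * oneTmul R α := by
  simp only [IsCorep, ← Matrix.ext_iff, tmulOne_mul_oneTmul_apply, Matrix.map_apply]

theorem IsLeibniz.map_matrix_mul (hD : IsLeibniz D) (M N : Matrix n n A) :
    (M * N).map D = tmulOne R M * N.map D + M.map D * oneTmul R N := by
  ext i k
  simp [Matrix.mul_apply, Finset.sum_add_distrib, show ∀ a b, D (a * b) = _ from hD]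

theorem IsLeibniz.map_invOf (hD : IsLeibniz D) (Q : Matrix n n A) [Invertible Q] :
    (⅟Q).map D = -(tmulOne R (⅟Q) * Q.map D * oneTmul R (⅟Q)) := by
  have h : (⅟Q).map D * oneTmul R Q = -(tmulOne R (⅟Q) * Q.map D) :=
    eq_neg_of_add_eq_zero_right <| by rw [← hD.map_matrix_mul, invOf_mul_self, hD.map_matrix_one]
  calc (⅟Q).map D = (⅟Q).map D * oneTmul R (Q * ⅟Q) := by rw [mul_invOf_self, map_one, mul_one]
    _ = -(tmulOne R (⅟Q) * Q.map D * oneTmul R (⅟Q)) := by rw [map_mul, ← mul_assoc, h, neg_mul]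

theorem IsLeibniz.isCorep_mul_invOf_mul (hD : IsLeibniz D) {X : A} (hX : D X = 1 ⊗ₜ[R] 1)
    {β₁ β₂ β₃ : Matrix n n A} (h₁ : β₁.map D = 0) (h₂ : β₂.map D = 0) (h₃ : β₃.map D = 0)
    [Invertible (β₂ - β₁ * (X • 1) * β₃)] :
    IsCorep D (β₃ * ⅟(β₂ - β₁ * (X • 1) * β₃) * β₁) := by
  set Q := β₂ - β₁ * (X • 1) * β₃
  have hX' : (X • (1 : Matrix n n A)).map D = 1 := by
    rw [map_smul_one, hX, ← Algebra.TensorProduct.one_def, Matrix.diagonal_one]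
  have hQ : Q.map D = -(tmulOne R β₁ * oneTmul R β₃) := by
    rw [Matrix.map_sub D D.map_sub, h₂, hD.map_matrix_mul, hD.map_matrix_mul, h₁, h₃, hX']
    simp
  rw [isCorep_iff_map, hD.map_matrix_mul, hD.map_matrix_mul, hD.map_invOf, hQ, h₁, h₃]
  simp only [map_mul, mul_zero, zero_mul, add_zero, zero_add, mul_neg, neg_mul, neg_neg, mul_assoc]

end Matrix

end GDQ

open GDQ in
theorem stmt3_general {A : Type*} [Ring A] [Algebra ℂ A] {p : ℕ}
    (D : A →ₗ[ℂ] A ⊗[ℂ] A)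
    -- ∂ is a derivation
    (hder : ∀ a b : A, D (a * b) =
      (a ⊗ₜ[ℂ] (1 : A)) * D b + D a * ((1 : A) ⊗ₜ[ℂ] b))
    (X : A) (hX : D X = (1 : A) ⊗ₜ[ℂ] (1 : A))
    (β₁ β₂ β₃ : Matrix (Fin p) (Fin p) A)
    (hβ₁ : ∀ i j, β₁ i j ∈ LinearMap.ker D)
    (hβ₂ : ∀ i j, β₂ i j ∈ LinearMap.ker D)
    (hβ₃ : ∀ i j, β₃ i j ∈ LinearMap.ker D)
    [inst : Invertible (β₂ - β₁ * (X • (1 : Matrix (Fin p) (Fin p) A)) * β₃)] :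
    ∀ i k : Fin p,
      D ((β₃ * ⅟(β₂ - β₁ * (X • (1 : Matrix (Fin p) (Fin p) A)) * β₃) * β₁) i k) =
        ∑ j : Fin p,
          (β₃ * ⅟(β₂ - β₁ * (X • (1 : Matrix (Fin p) (Fin p) A)) * β₃) * β₁) i j ⊗ₜ[ℂ]
          (β₃ * ⅟(β₂ - β₁ * (X • (1 : Matrix (Fin p) (Fin p) A)) * β₃) * β₁) j k :=
  IsLeibniz.isCorep_mul_invOf_mul hder hX ((map_eq_zero_iff_forall_mem_ker β₁).2 hβ₁)
    ((map_eq_zero_iff_forall_mem_ker β₂).2 hβ₂) ((map_eq_zero_iff_forall_mem_ker β₃).2 hβ₃)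

theorem stmt3 {A : Type*} [Ring A] [Algebra ℂ A] {p : ℕ}
    (D : A →ₗ[ℂ] A ⊗[ℂ] A)
    -- ∂ is a derivation
    (hder : ∀ a b : A, D (a * b) =
      (a ⊗ₜ[ℂ] (1 : A)) * D b + D a * ((1 : A) ⊗ₜ[ℂ] b))
    -- ∂ is coassociative
    (hco : ∀ a : A, TensorProduct.assoc ℂ A A A (LinearMap.rTensor A D (D a)) =
      LinearMap.lTensor A D (D a))
    (X : A) (hX : D X = (1 : A) ⊗ₜ[ℂ] (1 : A))
    (β₁ β₂ β₃ : Matrix (Fin p) (Fin p) A)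
    (hβ₁ : ∀ i j, β₁ i j ∈ LinearMap.ker D)
    (hβ₂ : ∀ i j, β₂ i j ∈ LinearMap.ker D)
    (hβ₃ : ∀ i j, β₃ i j ∈ LinearMap.ker D)
    [inst : Invertible (β₂ - β₁ * (X • (1 : Matrix (Fin p) (Fin p) A)) * β₃)] :
    ∀ i k : Fin p,
      D ((β₃ * ⅟(β₂ - β₁ * (X • (1 : Matrix (Fin p) (Fin p) A)) * β₃) * β₁) i k) =
        ∑ j : Fin p,
          (β₃ * ⅟(β₂ - β₁ * (X • (1 : Matrix (Fin p) (Fin p) A)) * β₃) * β₁) i j ⊗ₜ[ℂ]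
          (β₃ * ⅟(β₂ - β₁ * (X • (1 : Matrix (Fin p) (Fin p) A)) * β₃) * β₁) j k :=
  stmt3_general D hder X hX β₁ β₂ β₃ hβ₁ hβ₂ hβ₃ (inst := inst)
end

section
/- Let (A, μ, ∂) be a unital GDQ ring, ξ ∈ M_p(A) a corepresentation, and β ∈ M_p(Ker ∂). If 1 − ξβ is invertible in M_p(A), then α = (1 − ξβ)⁻¹ξ is a corepresentation. Similarly, if 1 − βξ is invertible, then γ = ξ(1 − βξ)⁻¹ is a corepresentation. -/
/- STATEMENT 4: (Lemma 3.2) If ξ is a corepresentation of a unital GDQ ring and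
β ∈ M_p(Ker ∂), then (1 − ξβ)⁻¹ξ is a corepresentation (when 1 − ξβ is invertible),
and ξ(1 − βξ)⁻¹ is a corepresentation (when 1 − βξ is invertible). -/

open TensorProduct

noncomputable section

/-- `ξ ∈ M_p(A)` is a corepresentation: `∂ξ_{ik} = Σ_j ξ_{ij} ⊗ ξ_{jk}`. -/
def IsCorep {A : Type*} [Ring A] [Algebra ℂ A] {p : ℕ}
    (D : A →ₗ[ℂ] A ⊗[ℂ] A) (ξ : Matrix (Fin p) (Fin p) A) : Prop :=
  ∀ i k : Fin p, D (ξ i k) = ∑ j : Fin p, ξ i j ⊗ₜ[ℂ] ξ j k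

namespace Stmt4Aux

variable {A : Type*} [Ring A] [Algebra ℂ A] {p : ℕ}

/-- `a ↦ a ⊗ 1` as a ring hom on matrices. -/
def fL (A : Type*) [Ring A] [Algebra ℂ A] {p : ℕ} :
    Matrix (Fin p) (Fin p) A →+* Matrix (Fin p) (Fin p) (A ⊗[ℂ] A) :=
  (Algebra.TensorProduct.includeLeftRingHom : A →+* A ⊗[ℂ] A).mapMatrix

/-- `a ↦ 1 ⊗ a` as a ring hom on matrices. -/
def fR (A : Type*) [Ring A] [Algebra ℂ A] {p : ℕ} :
    Matrix (Fin p) (Fin p) A →+* Matrix (Fin p) (Fin p) (A ⊗[ℂ] A) :=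
  ((Algebra.TensorProduct.includeRight : A →ₐ[ℂ] A ⊗[ℂ] A) :
    A →+* A ⊗[ℂ] A).mapMatrix

lemma fL_apply (X : Matrix (Fin p) (Fin p) A) (i k : Fin p) :
    fL A X i k = X i k ⊗ₜ[ℂ] 1 := rfl

lemma fR_apply (X : Matrix (Fin p) (Fin p) A) (i k : Fin p) :
    fR A X i k = (1 : A) ⊗ₜ[ℂ] X i k := rfl

variable (D : A →ₗ[ℂ] A ⊗[ℂ] A)
  (hder : ∀ a b : A, D (a * b) =
      (a ⊗ₜ[ℂ] (1 : A)) * D b + D a * ((1 : A) ⊗ₜ[ℂ] b))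

include hder

lemma D_one : D 1 = 0 := by
  have h := hder 1 1
  rw [one_mul, ← Algebra.TensorProduct.one_def, one_mul, mul_one] at h
  have := h.symm
  rw [add_eq_left] at this
  exact this

lemma mapD_mul (X Y : Matrix (Fin p) (Fin p) A) :
    (X * Y).map D = fL A X * Y.map D + X.map D * fR A Y := by
  ext i k
  simp only [Matrix.map_apply, Matrix.mul_apply, Matrix.add_apply, map_sum,
    fL_apply, fR_apply, hder, Finset.sum_add_distrib]

lemma mapD_one : (1 : Matrix (Fin p) (Fin p) A).map D = 0 := by
  ext i k
  simp only [Matrix.map_apply, Matrix.one_apply, Matrix.zero_apply]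
  split_ifs
  · exact D_one D hder
  · exact map_zero D

lemma corep_iff (ζ : Matrix (Fin p) (Fin p) A) :
    IsCorep D ζ ↔ ζ.map D = fL A ζ * fR A ζ := by
  have key : ∀ i k : Fin p, (fL A ζ * fR A ζ) i k = ∑ j : Fin p, ζ i j ⊗ₜ[ℂ] ζ j k := by
    intro i k
    rw [Matrix.mul_apply]
    refine Finset.sum_congr rfl fun j _ => ?_
    rw [fL_apply, fR_apply, Algebra.TensorProduct.tmul_mul_tmul, mul_one, one_mul]
  constructor
  · intro h
    ext i k
    rw [Matrix.map_apply, h i k, key]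
  · intro h i k
    have h2 := congrFun (congrFun h i) k
    rw [Matrix.map_apply, key] at h2
    exact h2

/-- Derivative of the inverse. -/
lemma mapD_invOf (u : Matrix (Fin p) (Fin p) A) [Invertible u] :
    (⅟u).map D = - (fL A (⅟u) * (u.map D) * fR A (⅟u)) := by
  have e : (0 : Matrix (Fin p) (Fin p) (A ⊗[ℂ] A))
      = fL A u * (⅟u).map D + u.map D * fR A (⅟u) := by
    rw [← mapD_one D hder, ← mul_invOf_self u, mapD_mul D hder]
  have h2 : fL A (⅟u) * fL A u = 1 := by
    rw [← map_mul, invOf_mul_self, map_one]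
  have e2 : fL A u * (⅟u).map D = - (u.map D * fR A (⅟u)) := by
    rw [eq_comm, neg_eq_iff_add_eq_zero, add_comm]
    exact e.symm
  calc (⅟u).map D = (fL A (⅟u) * fL A u) * (⅟u).map D := by rw [h2, one_mul]
    _ = fL A (⅟u) * (fL A u * (⅟u).map D) := by rw [mul_assoc]
    _ = fL A (⅟u) * -(u.map D * fR A (⅟u)) := by rw [e2]
    _ = - (fL A (⅟u) * (u.map D) * fR A (⅟u)) := by
        rw [mul_neg, mul_assoc]

end Stmt4Aux

set_option maxHeartbeats 1000000 in
open Stmt4Aux in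
theorem stmt4 {A : Type*} [Ring A] [Algebra ℂ A] {p : ℕ}
    (D : A →ₗ[ℂ] A ⊗[ℂ] A)
    -- ∂ is a derivation
    (hder : ∀ a b : A, D (a * b) =
      (a ⊗ₜ[ℂ] (1 : A)) * D b + D a * ((1 : A) ⊗ₜ[ℂ] b))
    -- ∂ is coassociative
    (hco : ∀ a : A, TensorProduct.assoc ℂ A A A (LinearMap.rTensor A D (D a)) =
      LinearMap.lTensor A D (D a))
    (ξ β : Matrix (Fin p) (Fin p) A)
    (hξ : IsCorep D ξ)
    (hβ : ∀ i j, β i j ∈ LinearMap.ker D) :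
    (∀ _ : Invertible (1 - ξ * β), IsCorep D (⅟(1 - ξ * β) * ξ)) ∧
    (∀ _ : Invertible (1 - β * ξ), IsCorep D (ξ * ⅟(1 - β * ξ))) := by
  have hβ0 : β.map D = 0 := by
    ext i k
    simpa [Matrix.map_apply] using hβ i k
  have hξD : ξ.map D = fL A ξ * fR A ξ := (corep_iff D hder ξ).mp hξ
  constructor
  · intro hU
    have huD : (1 - ξ * β).map D = - (fL A ξ * fR A ξ * fR A β) := by
      have h : (1 - ξ * β).map D
          = (1 : Matrix (Fin p) (Fin p) A).map D - (ξ * β).map D := by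
        ext i k; simp [Matrix.map_apply, map_sub]
      rw [h, mapD_one D hder, mapD_mul D hder, hβ0, hξD]
      simp
    have hinvD : (⅟(1 - ξ * β)).map D
        = fL A (⅟(1 - ξ * β)) * (fL A ξ * fR A ξ * fR A β) * fR A (⅟(1 - ξ * β)) := by
      rw [mapD_invOf D hder (1 - ξ * β), huD]
      simp [mul_neg, neg_mul]
    have h0 : (1 - ξ * β) * (⅟(1 - ξ * β) * ξ) = ξ := by
      rw [← mul_assoc, mul_invOf_self, one_mul]
    have h1 : ξ + ξ * β * (⅟(1 - ξ * β) * ξ) = ⅟(1 - ξ * β) * ξ := by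
      calc ξ + ξ * β * (⅟(1 - ξ * β) * ξ)
          = (1 - ξ * β) * (⅟(1 - ξ * β) * ξ) + ξ * β * (⅟(1 - ξ * β) * ξ) := by rw [h0]
        _ = ((1 - ξ * β) + ξ * β) * (⅟(1 - ξ * β) * ξ) := by rw [add_mul]
        _ = ⅟(1 - ξ * β) * ξ := by rw [sub_add_cancel, one_mul]
    rw [corep_iff D hder]
    have hfR : fR A ξ + fR A ξ * fR A β * (fR A (⅟(1 - ξ * β)) * fR A ξ)
        = fR A (⅟(1 - ξ * β)) * fR A ξ := by
      have := congrArg (fR A) h1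
      simpa [map_add, map_mul] using this
    rw [mapD_mul D hder, hξD, hinvD, map_mul, map_mul, ← hfR]
    noncomm_ring
  · intro hV
    have hvD : (1 - β * ξ).map D = - (fL A β * (fL A ξ * fR A ξ)) := by
      have h : (1 - β * ξ).map D
          = (1 : Matrix (Fin p) (Fin p) A).map D - (β * ξ).map D := by
        ext i k; simp [Matrix.map_apply, map_sub]
      rw [h, mapD_one D hder, mapD_mul D hder, hβ0, hξD]
      simp
    have hinvD : (⅟(1 - β * ξ)).map D
        = fL A (⅟(1 - β * ξ)) * (fL A β * (fL A ξ * fR A ξ)) * fR A (⅟(1 - β * ξ)) := by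
      rw [mapD_invOf D hder (1 - β * ξ), hvD]
      simp [mul_neg, neg_mul]
    have h0 : (ξ * ⅟(1 - β * ξ)) * (1 - β * ξ) = ξ := by
      rw [mul_assoc, invOf_mul_self, mul_one]
    have h1 : ξ + ξ * ⅟(1 - β * ξ) * (β * ξ) = ξ * ⅟(1 - β * ξ) := by
      calc ξ + ξ * ⅟(1 - β * ξ) * (β * ξ)
          = (ξ * ⅟(1 - β * ξ)) * (1 - β * ξ) + (ξ * ⅟(1 - β * ξ)) * (β * ξ) := by
            rw [h0, mul_assoc]
        _ = (ξ * ⅟(1 - β * ξ)) * ((1 - β * ξ) + β * ξ) := by rw [mul_add]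
        _ = ξ * ⅟(1 - β * ξ) := by rw [sub_add_cancel, mul_one]
    rw [corep_iff D hder]
    have hfL : fL A ξ + fL A ξ * fL A (⅟(1 - β * ξ)) * (fL A β * fL A ξ)
        = fL A ξ * fL A (⅟(1 - β * ξ)) := by
      have := congrArg (fL A) h1
      simpa [map_add, map_mul] using this
    rw [mapD_mul D hder, hξD, hinvD, map_mul, map_mul, ← hfL]
    noncomm_ring
end
end

section
/- Let (A, μ, ∂_{ij})_{1≤i,j≤p} be a multivariable GDQ ring with p² comultiplications. On Ã = M_p ⊗ A define ∂(T⊗a) = Σ_{i,j} ((T⊗I_p)Δ_{ij}) ⊗ ∂_{ij}a where Δ_{ij} = Σ_k e_{ki}⊗e_{jk} ∈ M_p⊗M_p, using the identification (M_p)⊗² ⊗ A⊗² ≅ Ã⊗Ã sending (T₁⊗T₂)⊗(a₁⊗a₂) to (T₁⊗a₁)⊗(T₂⊗a₂). Then ∂ is a derivation on Ã: ∂((T₁⊗a₁)(T₂⊗a₂)) = ((T₁⊗a₁)⊗(I_p⊗1))∂(T₂⊗a₂) + (∂(T₁⊗a₁))((I_p⊗1)⊗(T₂⊗a₂)). -/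
/-!
Under the algebra isomorphism `(M_p ⊗ M_p) ⊗ (A ⊗ A) ≅ Ã ⊗ Ã`, `∂(T ⊗ a)` is the image of
`Σ_{i,j} ((T ⊗ I_p) Δ_{ij}) ⊗ ∂_{ij} a`. Applying the Leibniz rule of `∂_{ij}` to `a₁ a₂` splits
`∂((T₁ T₂) ⊗ (a₁ a₂))` into two sums. In the first, `T₁ ⊗ I_p` and `a₁ ⊗ 1` are pulled out on
the left; in the second, `T₂` has to be moved to the right past `Δ_{ij}`, which is possible
because `(T ⊗ I_p) Δ_{ij} = Δ_{ij} (I_p ⊗ T)`.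
-/

open TensorProduct

noncomputable section

variable {p : ℕ} {A : Type*} [Ring A] [Algebra ℂ A]

/-- Matrix unit `e_{ij}` in `M_p(ℂ)`. -/
def matUnit (i j : Fin p) : Matrix (Fin p) (Fin p) ℂ := Matrix.single i j 1

/-- The map `T ⊗ (x ⊗ y) ↦ (T e_{ki} ⊗ x) ⊗ (e_{jk} ⊗ y)` (one summand of the
identification of `((T ⊗ I_p)Δ_{ij}) ⊗ (x ⊗ y)` with an element of Ã ⊗ Ã). -/
def Lmap (i j k : Fin p) :
    (Matrix (Fin p) (Fin p) ℂ ⊗[ℂ] (A ⊗[ℂ] A)) →ₗ[ℂ]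
      (Matrix (Fin p) (Fin p) ℂ ⊗[ℂ] A) ⊗[ℂ] (Matrix (Fin p) (Fin p) ℂ ⊗[ℂ] A) :=
  (TensorProduct.map
      (TensorProduct.map (LinearMap.mulRight ℂ (matUnit k i)) LinearMap.id)
      (TensorProduct.mk ℂ (Matrix (Fin p) (Fin p) ℂ) A (matUnit j k))).comp
    (TensorProduct.assoc ℂ (Matrix (Fin p) (Fin p) ℂ) A A).symm.toLinearMap

/-- The comultiplication `∂` on `Ã = M_p ⊗ A`:
`∂(T ⊗ a) = Σ_{i,j,k} (T e_{ki} ⊗ ·) ⊗ (e_{jk} ⊗ ·)` applied to `∂_{ij} a`. -/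
def Dbig (D : Fin p → Fin p → (A →ₗ[ℂ] A ⊗[ℂ] A)) :
    (Matrix (Fin p) (Fin p) ℂ ⊗[ℂ] A) →ₗ[ℂ]
      (Matrix (Fin p) (Fin p) ℂ ⊗[ℂ] A) ⊗[ℂ] (Matrix (Fin p) (Fin p) ℂ ⊗[ℂ] A) :=
  ∑ i : Fin p, ∑ j : Fin p, ∑ k : Fin p,
    (Lmap i j k).comp (LinearMap.lTensor (Matrix (Fin p) (Fin p) ℂ) (D i j))

namespace Matrix

variable {n R : Type*} [Fintype n] [DecidableEq n] [CommSemiring R]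

theorem sum_mul_single_tmul_single (T : Matrix n n R) (i j : n) :
    ∑ k, (T * single k i (1 : R)) ⊗ₜ[R] single j k (1 : R) =
      ∑ k, single k i (1 : R) ⊗ₜ[R] (single j k (1 : R) * T) := by
  induction T using Matrix.induction_on' with
  | h_zero => simp
  | h_add P Q hP hQ =>
    simp only [add_mul, mul_add, add_tmul, tmul_add, Finset.sum_add_distrib, hP, hQ]
  | h_std_basis a b x =>
    have single_eq_smul (c d : n) : single c d x = x • single c d (1 : R) := by
      rw [smul_single, smul_eq_mul, mul_one]
    rw [Finset.sum_eq_single b (fun k _ hk => by simp [single_mul_single_of_ne, Ne.symm hk])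
        (by simp),
      Finset.sum_eq_single a (fun k _ hk => by simp [single_mul_single_of_ne, hk]) (by simp),
      single_mul_single_same, single_mul_single_same, mul_one, one_mul,
      single_eq_smul, single_eq_smul, smul_tmul]

end Matrix

local notation "Mp" => Matrix (Fin p) (Fin p) ℂ

def matDelta (i j : Fin p) : Mp ⊗[ℂ] Mp := ∑ k, matUnit k i ⊗ₜ matUnit j k

theorem tmul_one_mul_matDelta (T : Mp) (i j : Fin p) :
    (T ⊗ₜ[ℂ] (1 : Mp)) * matDelta i j = matDelta i j * ((1 : Mp) ⊗ₜ[ℂ] T) := by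
  simp only [matDelta, Finset.mul_sum, Finset.sum_mul, Algebra.TensorProduct.tmul_mul_tmul,
    one_mul, mul_one]
  exact Matrix.sum_mul_single_tmul_single T i j

variable (p A) in
abbrev tensorShuffle :
    (Mp ⊗[ℂ] Mp) ⊗[ℂ] (A ⊗[ℂ] A) ≃ₐ[ℂ] (Mp ⊗[ℂ] A) ⊗[ℂ] (Mp ⊗[ℂ] A) :=
  Algebra.TensorProduct.tensorTensorTensorComm ℂ ℂ ℂ ℂ Mp Mp A A

theorem Lmap_tmul (i j k : Fin p) (T : Mp) (z : A ⊗[ℂ] A) :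
    Lmap i j k (T ⊗ₜ z) = tensorShuffle p A (((T * matUnit k i) ⊗ₜ matUnit j k) ⊗ₜ z) := by
  induction z using TensorProduct.induction_on with
  | zero => simp
  | tmul x y => rfl
  | add u v hu hv => simp only [tmul_add, map_add, hu, hv]

theorem Dbig_tmul (D : Fin p → Fin p → (A →ₗ[ℂ] A ⊗[ℂ] A)) (T : Mp) (a : A) :
    Dbig D (T ⊗ₜ a) =
      ∑ i, ∑ j, tensorShuffle p A ((T ⊗ₜ[ℂ] (1 : Mp) * matDelta i j) ⊗ₜ D i j a) := by
  simp [Dbig, Lmap_tmul, matDelta, Finset.mul_sum, Algebra.TensorProduct.tmul_mul_tmul, sum_tmul]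

theorem stmt6_general (D : Fin p → Fin p → (A →ₗ[ℂ] A ⊗[ℂ] A))
    -- each ∂_{ij} is a derivation
    (hder : ∀ (i j : Fin p) (a b : A), D i j (a * b) =
      (a ⊗ₜ[ℂ] (1 : A)) * D i j b + D i j a * ((1 : A) ⊗ₜ[ℂ] b)) :
    ∀ (T₁ T₂ : Matrix (Fin p) (Fin p) ℂ) (a₁ a₂ : A),
      Dbig D ((T₁ ⊗ₜ[ℂ] a₁) * (T₂ ⊗ₜ[ℂ] a₂)) =
        ((T₁ ⊗ₜ[ℂ] a₁) ⊗ₜ[ℂ] (1 : Matrix (Fin p) (Fin p) ℂ ⊗[ℂ] A)) * Dbig D (T₂ ⊗ₜ[ℂ] a₂) +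
        Dbig D (T₁ ⊗ₜ[ℂ] a₁) * ((1 : Matrix (Fin p) (Fin p) ℂ ⊗[ℂ] A) ⊗ₜ[ℂ] (T₂ ⊗ₜ[ℂ] a₂)) := by
  intro T₁ T₂ a₁ a₂
  -- unification does not find the ring structure of `Ã ⊗ Ã` unless it is given
  simp only [Algebra.TensorProduct.tmul_mul_tmul, Dbig_tmul, hder,
    Finset.mul_sum (R := (Mp ⊗[ℂ] A) ⊗[ℂ] (Mp ⊗[ℂ] A)),
    Finset.sum_mul (R := (Mp ⊗[ℂ] A) ⊗[ℂ] (Mp ⊗[ℂ] A)), ← Finset.sum_add_distrib]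
  refine Finset.sum_congr rfl fun i _ => Finset.sum_congr rfl fun j _ => ?_
  have mul_tmul_one : (T₁ * T₂) ⊗ₜ[ℂ] (1 : Mp) = (T₁ ⊗ₜ 1) * (T₂ ⊗ₜ 1) := by
    rw [Algebra.TensorProduct.tmul_mul_tmul, one_mul]
  calc tensorShuffle p A (((T₁ * T₂) ⊗ₜ 1 * matDelta i j) ⊗ₜ
          ((a₁ ⊗ₜ 1) * D i j a₂ + D i j a₁ * (1 ⊗ₜ a₂)))
      = tensorShuffle p A (((T₁ ⊗ₜ 1) ⊗ₜ (a₁ ⊗ₜ 1)) * ((T₂ ⊗ₜ 1 * matDelta i j) ⊗ₜ D i j a₂) +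
          ((T₁ ⊗ₜ 1 * matDelta i j) ⊗ₜ D i j a₁) * ((1 ⊗ₜ T₂) ⊗ₜ (1 ⊗ₜ a₂))) := by
        rw [tmul_add, Algebra.TensorProduct.tmul_mul_tmul, Algebra.TensorProduct.tmul_mul_tmul,
          mul_tmul_one, mul_assoc, mul_assoc (T₁ ⊗ₜ 1) (matDelta i j), ← tmul_one_mul_matDelta]
    _ = _ := by
        rw [map_add, map_mul, map_mul]
        simp only [Algebra.TensorProduct.tensorTensorTensorComm_tmul,
          Algebra.TensorProduct.one_def]

theorem stmt6 (D : Fin p → Fin p → (A →ₗ[ℂ] A ⊗[ℂ] A))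
    -- each ∂_{ij} is a derivation
    (hder : ∀ (i j : Fin p) (a b : A), D i j (a * b) =
      (a ⊗ₜ[ℂ] (1 : A)) * D i j b + D i j a * ((1 : A) ⊗ₜ[ℂ] b))
    -- each ∂_{ij} is coassociative and they are compatible
    (hcompat : ∀ (i j k l : Fin p) (a : A),
      TensorProduct.assoc ℂ A A A (LinearMap.rTensor A (D i j) (D k l a)) =
        LinearMap.lTensor A (D k l) (D i j a)) :
    ∀ (T₁ T₂ : Matrix (Fin p) (Fin p) ℂ) (a₁ a₂ : A),
      Dbig D ((T₁ ⊗ₜ[ℂ] a₁) * (T₂ ⊗ₜ[ℂ] a₂)) =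
        ((T₁ ⊗ₜ[ℂ] a₁) ⊗ₜ[ℂ] (1 : Matrix (Fin p) (Fin p) ℂ ⊗[ℂ] A)) * Dbig D (T₂ ⊗ₜ[ℂ] a₂) +
        Dbig D (T₁ ⊗ₜ[ℂ] a₁) * ((1 : Matrix (Fin p) (Fin p) ℂ ⊗[ℂ] A) ⊗ₜ[ℂ] (T₂ ⊗ₜ[ℂ] a₂)) :=
  stmt6_general D hder
end
end

section
/- Let (Ωₙ)_{n≥1} be an open fully matricial G-set (G a Banach space): each Ωₙ ⊂ Mₙ(G) is open, Ω_{m+n} ∩ (M_m(G)⊕Mₙ(G)) = Ω_m ⊕ Ωₙ, and (AdS⊗I)(Ωₙ) = Ωₙ for S ∈ GL(n,ℂ). Then for g' ∈ Ω_m, g'' ∈ Ωₙ, and any γ ∈ M_{m,n}(G), the block matrix [[g', γ],[0, g'']] lies in Ω_{m+n}. -/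
/- STATEMENT 11: (Proposition 6.2) If (Ωₙ) is an open fully matricial G-set and
g' ∈ Ω_m, g'' ∈ Ωₙ, γ ∈ M_{m,n}(G), then [[g', γ],[0, g'']] ∈ Ω_{m+n}. -/

noncomputable section

/-- Left multiplication of a `G`-valued matrix by a scalar matrix:
`(S · g) i j = Σ k, S i k • g k j`. -/
def cmul {G : Type*} [AddCommGroup G] [Module ℂ G] {ι κ : Type*} [Fintype κ]
    (S : Matrix ι κ ℂ) (g : Matrix κ ι G) : Matrix ι ι G :=
  Matrix.of fun i j => ∑ k, S i k • g k j

/-- Right multiplication of a `G`-valued matrix by a scalar matrix: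
`(g · S) i j = Σ k, S k j • g i k`. -/
def mulc {G : Type*} [AddCommGroup G] [Module ℂ G] {ι κ : Type*} [Fintype κ]
    (g : Matrix ι κ G) (S : Matrix κ ι ℂ) : Matrix ι ι G :=
  Matrix.of fun i j => ∑ k, S k j • g i k

lemma cmul_diagonal {G : Type*} [AddCommGroup G] [Module ℂ G] {ι : Type*} [Fintype ι]
    [DecidableEq ι] (d : ι → ℂ) (g : Matrix ι ι G) (i j : ι) :
    cmul (Matrix.diagonal d) g i j = d i • g i j := by
  simp [cmul, Matrix.diagonal_apply, ite_smul, Finset.sum_ite_eq]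

lemma mulc_diagonal {G : Type*} [AddCommGroup G] [Module ℂ G] {ι : Type*} [Fintype ι]
    [DecidableEq ι] (d : ι → ℂ) (g : Matrix ι ι G) (i j : ι) :
    mulc g (Matrix.diagonal d) i j = d j • g i j := by
  simp [mulc, Matrix.diagonal_apply, ite_smul, Finset.sum_ite_eq']

theorem stmt11 {G : Type*} [NormedAddCommGroup G] [NormedSpace ℂ G] [CompleteSpace G]
    (Ω : (n : ℕ) → Set (Matrix (Fin n) (Fin n) G))
    -- open
    (hopen : ∀ n, 1 ≤ n → IsOpen (Ω n))
    -- (FMS2): Ω_{m+n} ∩ (M_m(G) ⊕ Mₙ(G)) = Ω_m ⊕ Ωₙ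
    (hFMS2 : ∀ (m n : ℕ), 1 ≤ m → 1 ≤ n →
      ∀ (g' : Matrix (Fin m) (Fin m) G) (g'' : Matrix (Fin n) (Fin n) G),
      (Matrix.reindex finSumFinEquiv finSumFinEquiv (Matrix.fromBlocks g' 0 0 g'')
          ∈ Ω (m + n)) ↔ (g' ∈ Ω m ∧ g'' ∈ Ω n))
    -- (FMS3): (Ad S ⊗ I)(Ωₙ) = Ωₙ for S ∈ GL(n, ℂ)
    (hFMS3 : ∀ (n : ℕ), 1 ≤ n → ∀ (S : GL (Fin n) ℂ) (g : Matrix (Fin n) (Fin n) G),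
      g ∈ Ω n → cmul (S : Matrix (Fin n) (Fin n) ℂ)
        (mulc g (↑S⁻¹ : Matrix (Fin n) (Fin n) ℂ)) ∈ Ω n) :
    ∀ (m n : ℕ), 1 ≤ m → 1 ≤ n →
      ∀ (g' : Matrix (Fin m) (Fin m) G) (g'' : Matrix (Fin n) (Fin n) G)
        (γ : Matrix (Fin m) (Fin n) G),
      g' ∈ Ω m → g'' ∈ Ω n →
      Matrix.reindex finSumFinEquiv finSumFinEquiv (Matrix.fromBlocks g' γ 0 g'')
        ∈ Ω (m + n) := by
  intro m n hm hn g' g'' γ hg' hg''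
  have hN : 1 ≤ m + n := by omega
  set e : Fin m ⊕ Fin n ≃ Fin (m + n) := finSumFinEquiv with he
  set f : ℂ → Matrix (Fin (m + n)) (Fin (m + n)) G :=
    fun ε => Matrix.reindex e e (Matrix.fromBlocks g' (ε • γ) 0 g'') with hf
  have hcont : Continuous f := by
    apply continuous_matrix
    intro i j
    simp only [hf, Matrix.reindex_apply, Matrix.submatrix_apply]
    rcases e.symm i with i' | i' <;> rcases e.symm j with j' | j'
    · exact continuous_const
    · simp only [Matrix.fromBlocks_apply₁₂, Matrix.smul_apply]
      exact continuous_id.smul continuous_const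
    · exact continuous_const
    · exact continuous_const
  have h0 : f 0 ∈ Ω (m + n) := by
    have : f 0 = Matrix.reindex e e (Matrix.fromBlocks g' 0 0 g'') := by
      simp [hf]
    rw [this]
    exact (hFMS2 m n hm hn g' g'').mpr ⟨hg', hg''⟩
  have hU : IsOpen (f ⁻¹' Ω (m + n)) := (hopen _ hN).preimage hcont
  obtain ⟨r, hr, hball⟩ := Metric.isOpen_iff.mp hU 0 h0
  set ε : ℂ := ((r / 2 : ℝ) : ℂ) with hε
  have hε0 : ε ≠ 0 := by
    simp [hε, Complex.ofReal_ne_zero]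
    positivity
  have hfε : f ε ∈ Ω (m + n) := by
    apply hball
    simp only [Metric.mem_ball, dist_zero_right, hε, Complex.norm_real]
    rw [Real.norm_eq_abs, abs_of_pos (by positivity)]
    linarith
  -- build the GL element diag(ε⁻¹ I_m, I_n)
  set d : Fin (m + n) → ℂ := fun i => Sum.elim (fun _ => ε⁻¹) (fun _ => 1) (e.symm i) with hd
  set d' : Fin (m + n) → ℂ := fun i => Sum.elim (fun _ => ε) (fun _ => 1) (e.symm i) with hd'
  have hdd' : ∀ i, d i * d' i = 1 := by
    intro i
    simp only [hd, hd']
    rcases e.symm i with i' | i' <;> simp [inv_mul_cancel₀ hε0]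
  have hd'd : ∀ i, d' i * d i = 1 := fun i => by rw [mul_comm]; exact hdd' i
  set S : GL (Fin (m + n)) ℂ :=
    ⟨Matrix.diagonal d, Matrix.diagonal d',
      by rw [Matrix.diagonal_mul_diagonal]; simp only [hdd']; exact Matrix.diagonal_one,
      by rw [Matrix.diagonal_mul_diagonal]; simp only [hd'd]; exact Matrix.diagonal_one⟩ with hS
  have key := hFMS3 (m + n) hN S (f ε) hfε
  have hcoe : (S : Matrix (Fin (m + n)) (Fin (m + n)) ℂ) = Matrix.diagonal d := rfl
  have hcoe' : ((S⁻¹ : GL (Fin (m + n)) ℂ) : Matrix (Fin (m + n)) (Fin (m + n)) ℂ)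
      = Matrix.diagonal d' := rfl
  rw [hcoe, hcoe'] at key
  have heq : cmul (Matrix.diagonal d) (mulc (f ε) (Matrix.diagonal d'))
      = Matrix.reindex e e (Matrix.fromBlocks g' γ 0 g'') := by
    ext i j
    rw [cmul_diagonal, mulc_diagonal]
    simp only [hf, hd, hd', Matrix.reindex_apply, Matrix.submatrix_apply]
    rcases e.symm i with i' | i' <;> rcases e.symm j with j' | j' <;>
      simp [Matrix.fromBlocks, smul_smul, inv_mul_cancel₀ hε0]
  rw [heq] at key
  exact key
end
end
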